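/- arXiv:1412.5359 — 2 statements merged into one kernel-verified Lean document; each statement's English description precedes it below -/
import Mathlib

section
/- Let α > 1/2. There exists a constant C > 0 such that for all real numbers p ≠ 0, q, r, one has ∫_ℝ dx / ⟨p x² + q x + r⟩^α ≤ C / |p|^{1/2}, where ⟨y⟩ = √(1 + y²). (In particular the integral is finite and, for |p| ≥ 1, bounded by C/|p|^{1/2} ≤ C.) -/
open MeasureTheory Real

/-- The Japanese bracket `⟨y⟩ = √(1 + y²)`. -/
noncomputable def jb (y : ℝ) : ℝ := Real.sqrt (1 + y ^ 2)

/-!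
Completing the square and substituting `u = √|p| (x + q/(2p))` turn the integral into
`|p|^(-1/2) ∫ ⟨u² - c⟩^(-α) du` (using `⟨-y⟩ = ⟨y⟩`), so it suffices to bound the latter uniformly
in `c`. With `s = √(max c 0)` and `m = min |u - s| |u + s|` one has `m² ≤ |u² - c|` and
`⟨m⟩² ≤ √2 ⟨m²⟩`, hence `⟨u² - c⟩^(-α) ≤ 2^(α/2) (⟨u - s⟩^(-2α) + ⟨u + s⟩^(-2α))`: two translates
of `⟨u⟩^(-2α)`, which is integrable since `2α > 1`.
-/

lemma jb_pos (y : ℝ) : 0 < jb y := Real.sqrt_pos.2 (by positivity)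

lemma jb_abs (y : ℝ) : jb |y| = jb y := by rw [jb, jb, sq_abs]

lemma jb_neg (y : ℝ) : jb (-y) = jb y := by rw [jb, jb, neg_sq]

lemma jb_le_jb {a b : ℝ} (h : |a| ≤ |b|) : jb a ≤ jb b :=
  Real.sqrt_le_sqrt (by nlinarith [sq_le_sq.2 h])

lemma one_div_jb_rpow (β y : ℝ) : 1 / jb y ^ β = (1 + ‖y‖ ^ 2) ^ (-β / 2) := by
  rw [jb, Real.sqrt_eq_rpow, ← Real.rpow_mul (by positivity), Real.norm_eq_abs, sq_abs,
    one_div, ← Real.rpow_neg (by positivity)]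
  ring_nf

lemma integrable_one_div_jb_rpow {β : ℝ} (hβ : 1 < β) : Integrable fun y : ℝ => 1 / jb y ^ β := by
  simp_rw [one_div_jb_rpow]
  exact integrable_rpow_neg_one_add_norm_sq (by simpa using hβ)

lemma integral_one_div_jb_rpow_pos {β : ℝ} (hβ : 1 < β) : 0 < ∫ y : ℝ, 1 / jb y ^ β := by
  have hpos (y : ℝ) : 0 < 1 / jb y ^ β := by have := jb_pos y; positivity
  rw [integral_pos_iff_support_of_nonneg (fun y => (hpos y).le) (integrable_one_div_jb_rpow hβ),
    Function.support_eq_univ fun y => (hpos y).ne']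
  simp

lemma jb_rpow_two_mul_le {α : ℝ} (hα : 0 ≤ α) (y : ℝ) :
    jb y ^ (2 * α) ≤ √2 ^ α * jb (y ^ 2) ^ α := by
  have hsq : jb y ^ 2 ≤ √2 * jb (y ^ 2) := by
    rw [jb, jb, Real.sq_sqrt (by positivity), ← Real.sqrt_mul zero_le_two]
    apply Real.le_sqrt_of_sq_le
    nlinarith [sq_nonneg (y ^ 2 - 1)]
  rw [Real.rpow_mul (jb_pos y).le, ← Real.mul_rpow (by positivity) (jb_pos _).le]
  exact_mod_cast Real.rpow_le_rpow (by positivity) hsq hα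

lemma exists_one_div_jb_sq_sub_rpow_le {α : ℝ} (hα : 0 ≤ α) (c : ℝ) : ∃ s : ℝ, ∀ u : ℝ,
    1 / jb (u ^ 2 - c) ^ α ≤ √2 ^ α * (1 / jb (u - s) ^ (2 * α) + 1 / jb (u + s) ^ (2 * α)) := by
  refine ⟨√(max c 0), fun u => ?_⟩
  set s := √(max c 0)
  set m := min |u - s| |u + s|
  have hm : m ^ 2 ≤ |u ^ 2 - c| := calc
    m ^ 2 ≤ |u - s| * |u + s| := by
      rw [sq]; exact mul_le_mul (min_le_left _ _) (min_le_right _ _) (by positivity) (abs_nonneg _)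
    _ = |u ^ 2 - s ^ 2| := by rw [← abs_mul]; ring_nf
    _ ≤ |u ^ 2 - c| := by
      rw [Real.sq_sqrt (le_max_right c 0)]
      rcases le_total c 0 with hc | hc
      · rw [max_eq_right hc, sub_zero, abs_of_nonneg (sq_nonneg u), abs_of_nonneg (by nlinarith)]
        linarith
      · rw [max_eq_left hc]
  have hjb : jb m ^ (2 * α) ≤ √2 ^ α * jb (u ^ 2 - c) ^ α := by
    refine (jb_rpow_two_mul_le hα m).trans (mul_le_mul_of_nonneg_left ?_ (by positivity))
    exact Real.rpow_le_rpow (jb_pos _).le (jb_le_jb (by rwa [abs_of_nonneg (sq_nonneg m)])) hα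
  have hmin : 1 / jb m ^ (2 * α) ≤ 1 / jb (u - s) ^ (2 * α) + 1 / jb (u + s) ^ (2 * α) := by
    have h₁ := jb_pos (u - s); have h₂ := jb_pos (u + s)
    rcases min_choice |u - s| |u + s| with h | h <;> simp only [m, h, jb_abs]
    · exact le_add_of_nonneg_right (by positivity)
    · exact le_add_of_nonneg_left (by positivity)
  have h₀ := jb_pos m; have h₁ := jb_pos (u ^ 2 - c)
  calc 1 / jb (u ^ 2 - c) ^ α ≤ √2 ^ α * (1 / jb m ^ (2 * α)) := by
        rw [mul_one_div, div_le_div_iff₀ (by positivity) (by positivity), one_mul]; exact hjb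
    _ ≤ _ := mul_le_mul_of_nonneg_left hmin (by positivity)

lemma integral_one_div_jb_sq_sub_rpow_le {α : ℝ} (hα : 1 / 2 < α) (c : ℝ) :
    ∫ u : ℝ, 1 / jb (u ^ 2 - c) ^ α ≤ 2 * √2 ^ α * ∫ u : ℝ, 1 / jb u ^ (2 * α) := by
  obtain ⟨s, hs⟩ := exists_one_div_jb_sq_sub_rpow_le (by linarith) c
  have hI := integrable_one_div_jb_rpow (β := 2 * α) (by linarith)
  have hI₁ := hI.comp_sub_right s
  have hI₂ := hI.comp_add_right s
  calc ∫ u : ℝ, 1 / jb (u ^ 2 - c) ^ α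
      ≤ ∫ u : ℝ, √2 ^ α * (1 / jb (u - s) ^ (2 * α) + 1 / jb (u + s) ^ (2 * α)) :=
        integral_mono_of_nonneg (.of_forall fun u => by have := jb_pos (u ^ 2 - c); positivity)
          ((hI₁.add hI₂).const_mul _) (.of_forall hs)
    _ = 2 * √2 ^ α * ∫ u : ℝ, 1 / jb u ^ (2 * α) := by
        rw [integral_const_mul, integral_add hI₁ hI₂, integral_sub_right_eq_self
          (fun u => 1 / jb u ^ (2 * α)), integral_add_right_eq_self (fun u => 1 / jb u ^ (2 * α))]
        ring

lemma exists_jb_quadratic_eq {p : ℝ} (hp : p ≠ 0) (q r : ℝ) :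
    ∃ s c : ℝ, ∀ x : ℝ, jb (p * x ^ 2 + q * x + r) = jb ((√|p| * x + s) ^ 2 - c) := by
  have hb : √|p| ^ 2 = |p| := Real.sq_sqrt (abs_nonneg p)
  rcases hp.lt_or_gt with hneg | hpos
  · refine ⟨√|p| * q / (2 * p), r - q ^ 2 / (4 * p), fun x => ?_⟩
    rw [← jb_neg]
    congr 1
    field_simp
    rw [hb, abs_of_neg hneg]
    ring
  · refine ⟨√|p| * q / (2 * p), q ^ 2 / (4 * p) - r, fun x => ?_⟩
    congr 1
    field_simp
    rw [hb, abs_of_pos hpos]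
    ring

lemma integral_comp_mul_left_add (g : ℝ → ℝ) (a s : ℝ) :
    ∫ x : ℝ, g (a * x + s) = |a⁻¹| * ∫ y : ℝ, g y := by
  rw [Measure.integral_comp_mul_left (fun y => g (y + s)), integral_add_right_eq_self, smul_eq_mul]

/-- For `α > 1/2` there is `C > 0` with
`∫ dx / ⟨p x² + q x + r⟩^α ≤ C / |p|^(1/2)` for all `p ≠ 0`, `q`, `r`. -/
theorem stmt_2 (α : ℝ) (hα : α > 1 / 2) :
    ∃ C > 0, ∀ p q r : ℝ, p ≠ 0 →
      ∫ x : ℝ, 1 / jb (p * x ^ 2 + q * x + r) ^ α ≤ C / |p| ^ ((1 : ℝ) / 2) := by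
  have hI := integral_one_div_jb_rpow_pos (β := 2 * α) (by linarith)
  refine ⟨2 * √2 ^ α * ∫ u : ℝ, 1 / jb u ^ (2 * α), by positivity, fun p q r hp => ?_⟩
  obtain ⟨s, c, hquad⟩ := exists_jb_quadratic_eq hp q r
  have hb : 0 < √|p| := Real.sqrt_pos.2 (abs_pos.2 hp)
  simp_rw [hquad]
  rw [integral_comp_mul_left_add (fun y => 1 / jb (y ^ 2 - c) ^ α), abs_inv, abs_of_pos hb,
    ← Real.sqrt_eq_rpow, inv_mul_eq_div]
  exact div_le_div_of_nonneg_right (integral_one_div_jb_sq_sub_rpow_le hα c) hb.le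
end

section
/- For each N ∈ ℕ define subsets of ℝ²: A_N = {(τ₁,ξ₁) : |ξ₁ - N| < N^{-1}, |τ₁ - ξ₁²| < 6}, B_N = {(τ₂,ξ₂) : |ξ₂| < (2N)^{-1}, |τ₂ + ξ₂²| < 1}, R_N = {(τ,ξ) : |ξ - N| < (2N)^{-1}, |τ + ξ² - 2ξN| < 1}. Then for all N ≥ 1, R_N - B_N ⊆ A_N. -/
/-!
Write `(τ, ξ) ∈ R_N` and `(τ₂, ξ₂) ∈ B_N`. The frequency condition is the triangle inequality,
`1/(2N) + 1/(2N) = 1/N`. For the modulation, the identity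
`(τ - τ₂) - (ξ - ξ₂)² = (τ + ξ² - 2ξN) - (τ₂ + ξ₂²) + 2ξ(N - ξ + ξ₂)`
bounds it by `1 + 1 + 2|ξ| |N - ξ + ξ₂| < 2 + 2(N + 1/2)/N ≤ 5`.
-/

open Pointwise

namespace BilinearCounterexample

variable {N ξ ξ₂ : ℝ}

lemma abs_sub_sub_lt_inv (hξ : |ξ - N| < 1 / (2 * N)) (hξ₂ : |ξ₂| < 1 / (2 * N)) :
    |ξ - ξ₂ - N| < 1 / N := by
  calc |ξ - ξ₂ - N| = |(ξ - N) - ξ₂| := by ring_nf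
    _ ≤ |ξ - N| + |ξ₂| := abs_sub _ _
    _ < 1 / (2 * N) + 1 / (2 * N) := add_lt_add hξ hξ₂
    _ = 1 / N := by field_simp; norm_num

lemma abs_lt_add_half (hN : 1 ≤ N) (hξ : |ξ - N| < 1 / (2 * N)) : |ξ| < N + 1 / 2 := by
  have h_half : 1 / (2 * N) ≤ 1 / 2 := by gcongr; linarith
  rw [abs_lt] at hξ ⊢
  constructor <;> linarith

lemma abs_two_mul_mul_lt_three (hN : 1 ≤ N) (hξ : |ξ - N| < 1 / (2 * N))
    (hξ₂ : |ξ₂| < 1 / (2 * N)) : |2 * ξ * (N - ξ + ξ₂)| < 3 := by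
  have hN₀ : 0 < N := by linarith
  have h_shift : |N - ξ + ξ₂| < 1 / N := by
    rw [show N - ξ + ξ₂ = -(ξ - ξ₂ - N) by ring, abs_neg]
    exact abs_sub_sub_lt_inv hξ hξ₂
  calc |2 * ξ * (N - ξ + ξ₂)| = 2 * (|ξ| * |N - ξ + ξ₂|) := by
        rw [abs_mul, abs_mul, abs_two, mul_assoc]
    _ < 2 * ((N + 1 / 2) * (1 / N)) := by
        gcongr 2 * ?_
        exact mul_lt_mul'' (abs_lt_add_half hN hξ) h_shift (abs_nonneg _) (abs_nonneg _)
    _ = 2 + 1 / N := by field_simp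
    _ ≤ 3 := by linarith [(div_le_one hN₀).mpr hN]

lemma abs_sub_sub_sq_lt_six {τ τ₂ : ℝ} (hN : 1 ≤ N) (hξ : |ξ - N| < 1 / (2 * N))
    (hτ : |τ + ξ ^ 2 - 2 * ξ * N| < 1) (hξ₂ : |ξ₂| < 1 / (2 * N)) (hτ₂ : |τ₂ + ξ₂ ^ 2| < 1) :
    |τ - τ₂ - (ξ - ξ₂) ^ 2| < 6 := by
  have h_id : τ - τ₂ - (ξ - ξ₂) ^ 2
      = (τ + ξ ^ 2 - 2 * ξ * N) - (τ₂ + ξ₂ ^ 2) + 2 * ξ * (N - ξ + ξ₂) := by ring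
  have h_cross := abs_two_mul_mul_lt_three hN hξ hξ₂
  rw [h_id]
  rw [abs_lt] at hτ hτ₂ h_cross ⊢
  constructor <;> linarith [hτ.1, hτ.2, hτ₂.1, hτ₂.2, h_cross.1, h_cross.2]

end BilinearCounterexample

open BilinearCounterexample in
/-- For `N ≥ 1`, the inclusion `R_N - B_N ⊆ A_N` for the rectangles in `ℝ²`
used in the counterexample showing failure of the bilinear estimate (2.8)
for `s' ≥ s + 1/2`. -/
theorem stmt_19 (N : ℕ) (hN : 1 ≤ N) :
    {p : ℝ × ℝ | |p.2 - (N : ℝ)| < 1 / (2 * N) ∧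
        |p.1 + p.2 ^ 2 - 2 * p.2 * N| < 1} -
      {p : ℝ × ℝ | |p.2| < 1 / (2 * N) ∧ |p.1 + p.2 ^ 2| < 1} ⊆
    {p : ℝ × ℝ | |p.2 - (N : ℝ)| < 1 / N ∧ |p.1 - p.2 ^ 2| < 6} := by
  rintro _ ⟨r, ⟨hξ, hτ⟩, b, ⟨hξ₂, hτ₂⟩, rfl⟩
  have hN' : (1 : ℝ) ≤ N := by exact_mod_cast hN
  exact ⟨abs_sub_sub_lt_inv hξ hξ₂, abs_sub_sub_sq_lt_six hN' hξ hτ hξ₂ hτ₂⟩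
end
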